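/- Let A and B be M×M matrices over the complex numbers. Then det(I_M − A·B) = Σ_{m=0}^{M} (−1)^m Σ_{k,l} det A(k,l) · det B(l,k), where the inner sum runs over all ordered pairs (k,l) of subsets of {1,…,M}, each of cardinality m, and the m = 0 term contributes 1. -/

import Mathlib

/-!
Expanding `det (1 + C)` multilinearly in the rows gives the sum of all principal minors of `C`.
For `C = -A * B` the principal minor on `k` is `(-1)^|k| det (A(k,·) * B(·,k))`, and the
Cauchy–Binet formula expands it as `Σ_l det A(k,l) * det B(l,k)`.

Cauchy–Binet itself: expanding `det (P * Q)` multilinearly in the rows gives a sum over all maps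
`f` choosing a column of `P` for each row; a non-injective `f` repeats a row of `Q` and contributes
nothing, and an injective `f` is the increasing enumeration of its image composed with a
permutation, whose sign assembles `det P(·,s)`.
-/

open Finset Matrix

/-- For subsets `k, l ⊆ {1,…,M}`, both of cardinality `m`, the determinant of
the `m × m` submatrix `A(k,l)` of `A` whose rows are indexed by the elements
of `k` and whose columns by the elements of `l`, each taken in increasing
order.  (The value is `0` in the irrelevant case that `k` or `l` does not
have cardinality `m`; in the sums below the cardinalities are always `m`.) -/
noncomputable def pairMinor {M : ℕ} (A : Matrix (Fin M) (Fin M) ℂ) (m : ℕ)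
    (k l : Finset (Fin M)) : ℂ :=
  if h : k.card = m ∧ l.card = m then
    (A.submatrix (fun i : Fin m => k.orderEmbOfFin h.1 i)
      (fun j : Fin m => l.orderEmbOfFin h.2 j)).det
  else 0

theorem Fintype.sum_injective_eq_sum_orderEmbOfFin_comp_perm {β n : Type*} [AddCommMonoid β]
    [Fintype n] [LinearOrder n] {k : ℕ} (F : (Fin k → n) → β) :
    ∑ f : {f : Fin k → n // Function.Injective f}, F f =
      ∑ s : {s : Finset n // s.card = k}, ∑ σ : Equiv.Perm (Fin k),
        F (s.1.orderEmbOfFin s.2 ∘ σ) := by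
  rw [← Fintype.sum_prod_type']
  symm
  refine Fintype.sum_bijective
    (fun p => ⟨p.1.1.orderEmbOfFin p.1.2 ∘ p.2, (RelEmbedding.injective _).comp p.2.injective⟩)
    ⟨?_, ?_⟩ _ _ fun _ => rfl
  · rintro ⟨⟨s, hs⟩, σ⟩ ⟨⟨t, ht⟩, τ⟩ h
    have hcomp := congrArg Subtype.val h
    simp only at hcomp
    obtain rfl : s = t := by
      rw [← coe_inj, ← range_orderEmbOfFin s hs, ← range_orderEmbOfFin t ht,
        ← σ.surjective.range_comp, hcomp, τ.surjective.range_comp]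
    refine Prod.ext rfl (Equiv.ext fun i => (s.orderEmbOfFin hs).injective (congrFun hcomp i))
  · rintro ⟨f, hf⟩
    have hs : (univ.image f).card = k := by
      rw [card_image_of_injective _ hf, card_univ, Fintype.card_fin]
    let e := (univ.image f).orderIsoOfFin hs
    let g : Fin k → Fin k := fun i => e.symm ⟨f i, mem_image_of_mem f (mem_univ i)⟩
    have hg : Function.Injective g := fun i j hij =>
      hf (congrArg Subtype.val (e.symm.injective hij))
    refine ⟨(⟨_, hs⟩, Equiv.ofBijective g hg.bijective_of_finite),
      Subtype.ext (funext fun i => ?_)⟩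
    simp only [Function.comp_apply, Equiv.ofBijective_apply, g, ← coe_orderIsoOfFin_apply, e,
      OrderIso.apply_symm_apply]

namespace Matrix

variable {R : Type*} [CommRing R]

theorem det_mul_eq_sum_prod_mul_det_submatrix {m n : Type*} [Fintype m] [DecidableEq m]
    [Fintype n] [DecidableEq n] (P : Matrix m n R) (Q : Matrix n m R) :
    (P * Q).det = ∑ f : m → n, (∏ i, P i (f i)) * (Q.submatrix f id).det := by
  let D := (detRowAlternating (n := m) (R := R)).toMultilinearMap
  calc (P * Q).det = D fun i => ∑ x, P i x • Q x := by
        congr 1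
        ext i j
        simp [mul_apply]
    _ = ∑ f : m → n, D fun i => P i (f i) • Q (f i) := D.map_sum fun i x => P i x • Q x
    _ = _ := by
        refine sum_congr rfl fun f _ => ?_
        rw [D.map_smul_univ, smul_eq_mul]
        rfl

theorem det_submatrix_comp_perm {m n : Type*} [Fintype m] [DecidableEq m]
    (Q : Matrix n m R) (e : m → n) (σ : Equiv.Perm m) :
    (Q.submatrix (e ∘ σ) id).det = Equiv.Perm.sign σ * (Q.submatrix e id).det := by
  rw [← det_permute]
  rfl

theorem det_submatrix_id_eq_sum_perm {m n : Type*} [Fintype m] [DecidableEq m]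
    (P : Matrix m n R) (e : m → n) :
    (P.submatrix id e).det = ∑ σ : Equiv.Perm m, Equiv.Perm.sign σ * ∏ i, P i (e (σ i)) := by
  rw [← det_transpose, det_apply']
  rfl

theorem det_submatrix_eq_zero_of_not_injective {m n : Type*} [Fintype m] [DecidableEq m]
    (Q : Matrix n m R) {f : m → n} (hf : ¬Function.Injective f) :
    (Q.submatrix f id).det = 0 := by
  obtain ⟨i, j, hij, hne⟩ := Function.not_injective_iff.mp hf
  exact det_zero_of_row_eq hne (funext fun x => by simp [hij])

theorem det_mul_eq_sum_det_submatrix_orderEmbOfFin {k : ℕ} {n : Type*} [Fintype n]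
    [LinearOrder n] (P : Matrix (Fin k) n R) (Q : Matrix n (Fin k) R) :
    (P * Q).det = ∑ s : {s : Finset n // s.card = k},
      (P.submatrix id (s.1.orderEmbOfFin s.2)).det *
        (Q.submatrix (s.1.orderEmbOfFin s.2) id).det := by
  rw [det_mul_eq_sum_prod_mul_det_submatrix,
    ← Fintype.sum_subtype_add_sum_subtype Function.Injective,
    Fintype.sum_eq_zero (fun f : {f // ¬Function.Injective f} => _)
      fun f => by rw [det_submatrix_eq_zero_of_not_injective Q f.2, mul_zero],
    add_zero, Fintype.sum_injective_eq_sum_orderEmbOfFin_comp_perm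
      fun f => (∏ i, P i (f i)) * (Q.submatrix f id).det]
  refine sum_congr rfl fun s _ => ?_
  simp_rw [det_submatrix_comp_perm, det_submatrix_id_eq_sum_perm, sum_mul, mul_left_comm,
    mul_assoc, Function.comp_apply]

theorem det_one_add_eq_sum_det_submatrix {n : Type*} [Fintype n] [DecidableEq n]
    (C : Matrix n n R) :
    (1 + C).det = ∑ s : Finset n, (C.submatrix ((↑) : s → n) (↑)).det := by
  rw [add_comm, det]
  exact ((detRowAlternating (n := n) (R := R)).map_add_univ C.row (1 : Matrix n n R).row).trans
    (sum_congr rfl fun s _ => det_piecewise_one_eq_submatrix_det C s)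

theorem det_submatrix_coe_eq_det_submatrix_orderEmbOfFin {n : Type*} [LinearOrder n]
    (C : Matrix n n R) {s : Finset n} {k : ℕ} (h : s.card = k) :
    (C.submatrix ((↑) : s → n) (↑)).det =
      (C.submatrix (s.orderEmbOfFin h) (s.orderEmbOfFin h)).det := by
  rw [← det_submatrix_equiv_self (s.orderIsoOfFin h).toEquiv]
  rfl

end Matrix

theorem det_submatrix_mul_eq_sum_pairMinor {M m : ℕ} (A B : Matrix (Fin M) (Fin M) ℂ)
    {k : Finset (Fin M)} (hk : k.card = m) :
    ((A * B).submatrix (k.orderEmbOfFin hk) (k.orderEmbOfFin hk)).det =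
      ∑ l ∈ powersetCard m univ, pairMinor A m k l * pairMinor B m l k := by
  rw [submatrix_mul _ _ _ _ _ Function.bijective_id, det_mul_eq_sum_det_submatrix_orderEmbOfFin,
    sum_subtype _ fun l => mem_powersetCard_univ]
  refine Fintype.sum_congr _ _ fun l => ?_
  rw [pairMinor, pairMinor, dif_pos ⟨hk, l.2⟩, dif_pos ⟨l.2, hk⟩]
  rfl

/-- The key identity of Theorem 5.1:
`det(I_M − A·B) = Σ_{m=0}^{M} (−1)^m Σ_{k,l} det A(k,l) · det B(l,k)`,
the inner sum running over all pairs of subsets of `{1,…,M}` of cardinality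
`m`, and the `m = 0` term contributing `1`. -/
theorem det_one_sub_mul_eq_sum_minors (M : ℕ)
    (A B : Matrix (Fin M) (Fin M) ℂ) :
    (1 - A * B).det =
      ∑ m ∈ Finset.range (M + 1), (-1 : ℂ) ^ m *
        ∑ k ∈ Finset.powersetCard m (Finset.univ : Finset (Fin M)),
          ∑ l ∈ Finset.powersetCard m (Finset.univ : Finset (Fin M)),
            pairMinor A m k l * pairMinor B m l k := by
  rw [sub_eq_add_neg, det_one_add_eq_sum_det_submatrix, ← powerset_univ, sum_powerset,
    card_univ, Fintype.card_fin]
  refine sum_congr rfl fun m _ => ?_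
  rw [mul_sum]
  refine sum_congr rfl fun k hkm => ?_
  have hk : k.card = m := mem_powersetCard_univ.mp hkm
  simp only [submatrix_neg, Pi.neg_apply]
  rw [det_neg, Fintype.card_coe, hk, det_submatrix_coe_eq_det_submatrix_orderEmbOfFin _ hk,
    det_submatrix_mul_eq_sum_pairMinor A B hk]
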